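/- Let k ≥ 1 and j ≥ 2 be integers, and for each positive integer i let B_i denote the set of positive integers that are not (i,k)-representable. Suppose B_j is finite and nonempty with maximum element m, that m ≥ j, that B_{j+1} = {1} ∪ {n + 1 : n ∈ B_j}, and that ⌊((m − j)·2^k/(2^k − 1))^{1/k}⌋ = ⌊m^{1/k}⌋ (floors of real k-th roots). Then for every integer l ≥ j, B_l = {1, 2, ..., l − j} ∪ {n + (l − j) : n ∈ B_j} (where the first set is empty when l = j). In particular, for every l ≥ j and every positive integer m', m' + l is (l,k)-representable if and only if m' + j is (j,k)-representable. -/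
import Mathlib


/-- A positive integer `n` is `(j,k)`-representable if it is a sum of exactly `j`
positive `k`-th powers. -/
def IsRepr (n j k : ℕ) : Prop :=
  ∃ a : Fin j → ℕ, (∀ i, 0 < a i) ∧ ∑ i, (a i) ^ k = n

/-- For fixed `k`, `BSet k i` is the set of positive integers that are not
`(i,k)`-representable. -/
def BSet (k i : ℕ) : Set ℕ := {n : ℕ | 0 < n ∧ ¬ IsRepr n i k}


lemma isRepr_le {n j k : ℕ} (h : IsRepr n j k) : j ≤ n := by
  obtain ⟨a, hpos, hsum⟩ := h
  calc j = ∑ _i : Fin j, 1 := by simp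
    _ ≤ ∑ i, a i ^ k := Finset.sum_le_sum fun i _ => Nat.one_le_pow _ _ (hpos i)
    _ = n := hsum

lemma repr_cons {n j k b : ℕ} (hb : 0 < b) (h : IsRepr n j k) :
    IsRepr (n + b ^ k) (j + 1) k := by
  obtain ⟨a, hpos, hsum⟩ := h
  refine ⟨Fin.cons b a, fun i => ?_, ?_⟩
  · refine Fin.cases ?_ ?_ i <;> simp [hb, hpos]
  · simp [Fin.sum_univ_succ, hsum, Nat.add_comm]

lemma key (k j : ℕ) (hj : 2 ≤ j)
    (hsucc : BSet k (j + 1) = insert 1 ((· + 1) '' BSet k j)) :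
    ∀ L, j ≤ L → ∀ x, 1 ≤ x → (IsRepr (x + (L - j)) L k ↔ IsRepr x j k) := by
  have step : ∀ x, 1 ≤ x → IsRepr (x + 1) (j + 1) k → IsRepr x j k := by
    intro x hx h
    by_contra hc
    have hx1 : x + 1 ∈ BSet k (j + 1) := by
      rw [hsucc]
      exact Set.mem_insert_iff.mpr (Or.inr ⟨x, ⟨hx, hc⟩, rfl⟩)
    exact hx1.2 h
  refine Nat.le_induction ?_ ?_
  · simpa using fun x _ => Iff.rfl
  · intro i hi IH x hx
    obtain ⟨d, rfl⟩ : ∃ d, i = j + d := ⟨i - j, by omega⟩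
    have IH' : ∀ x, 1 ≤ x → (IsRepr (x + d) (j + d) k ↔ IsRepr x j k) := by
      simpa using IH
    have hsub : j + d + 1 - j = d + 1 := by omega
    rw [hsub]
    constructor
    · intro h
      obtain ⟨a, hpos, hsum⟩ := h
      obtain ⟨t, -, ht⟩ := Finset.exists_min_image Finset.univ a Finset.univ_nonempty
      by_cases hcase : a t ^ k ≤ x
      · -- remove the minimal part
        have hdecomp : ∑ s, a s ^ k = a t ^ k + ∑ s, a (t.succAbove s) ^ k :=
          Fin.sum_univ_succAbove (fun s => a s ^ k) t
        set S := ∑ s : Fin (j + d), a (t.succAbove s) ^ k with hS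
        have hSval : S = (x + 1 - a t ^ k) + d := by omega
        have hrest : IsRepr ((x + 1 - a t ^ k) + d) (j + d) k :=
          ⟨fun s => a (t.succAbove s), fun s => hpos _, by rw [← hS, hSval]⟩
        have hy : IsRepr (x + 1 - a t ^ k) j k := (IH' _ (by omega)).mp hrest
        have hx1 : IsRepr (x + 1) (j + 1) k := by
          have := repr_cons (hpos t) hy
          rwa [show x + 1 - a t ^ k + a t ^ k = x + 1 by omega] at this
        exact step x hx hx1
      · exfalso
        push_neg at hcase
        have hall : ∀ s : Fin (j + d + 1), x + 1 ≤ a s ^ k := fun s =>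
          lt_of_lt_of_le hcase (Nat.pow_le_pow_left (ht s (Finset.mem_univ s)) k)
        have hge : (j + d + 1) * (x + 1) ≤ x + (d + 1) := by
          calc (j + d + 1) * (x + 1) = ∑ _s : Fin (j + d + 1), (x + 1) := by
                simp [mul_comm]
            _ ≤ ∑ s, a s ^ k := Finset.sum_le_sum fun s _ => hall s
            _ = x + (d + 1) := hsum
        nlinarith
    · intro h
      have h1 : IsRepr (x + d) (j + d) k := (IH' x hx).mpr h
      have h2 := repr_cons (b := 1) one_pos h1
      simpa [add_assoc] using h2

/-- if `B_j` is finite, nonempty with maximum `m ≥ j`,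
`B_{j+1} = {1} ∪ {n + 1 : n ∈ B_j}`, and
`⌊((m - j)·2^k/(2^k - 1))^(1/k)⌋ = ⌊m^(1/k)⌋`, then for every `l ≥ j`,
`B_l = {1, …, l - j} ∪ {n + (l - j) : n ∈ B_j}`; in particular, for every `l ≥ j`
and positive `m'`, `m' + l` is `(l,k)`-representable iff `m' + j` is
`(j,k)`-representable. -/
theorem stmt_9 (k j m : ℕ) (hk : 1 ≤ k) (hj : 2 ≤ j)
    (hfin : (BSet k j).Finite)
    (hmem : m ∈ BSet k j) (hmax : ∀ x ∈ BSet k j, x ≤ m) (hmj : j ≤ m)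
    (hsucc : BSet k (j + 1) = insert 1 ((· + 1) '' BSet k j))
    (hfloor : ⌊(((m - j : ℕ) : ℝ) * 2 ^ k / (2 ^ k - 1)) ^ ((1 : ℝ) / k)⌋ =
      ⌊((m : ℝ)) ^ ((1 : ℝ) / k)⌋) :
    (∀ l : ℕ, j ≤ l →
      BSet k l = {n : ℕ | 1 ≤ n ∧ n ≤ l - j} ∪ ((· + (l - j)) '' BSet k j)) ∧
    (∀ l : ℕ, j ≤ l → ∀ m' : ℕ, 0 < m' →
      (IsRepr (m' + l) l k ↔ IsRepr (m' + j) j k)) := by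
  have K := key k j hj hsucc
  constructor
  · intro l hl
    ext n
    simp only [Set.mem_union, Set.mem_setOf_eq, Set.mem_image, BSet]
    constructor
    · rintro ⟨hn, hnr⟩
      by_cases hsmall : n ≤ l - j
      · exact Or.inl ⟨hn, hsmall⟩
      · push_neg at hsmall
        refine Or.inr ⟨n - (l - j), ⟨by omega, ?_⟩, by omega⟩
        intro hc
        have := (K l hl (n - (l - j)) (by omega)).mpr hc
        rw [show n - (l - j) + (l - j) = n by omega] at this
        exact hnr this
    · rintro (⟨h1, h2⟩ | ⟨x, ⟨hx, hxr⟩, rfl⟩)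
      · refine ⟨h1, fun hc => ?_⟩
        have := isRepr_le hc
        omega
      · refine ⟨by omega, fun hc => ?_⟩
        exact hxr ((K l hl x hx).mp hc)
  · intro l hl m' hm'
    have := K l hl (m' + j) (by omega)
    rwa [show m' + j + (l - j) = m' + l by omega] at this
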